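/- The derivative of h(x) = N(x/2) + (1/(3√(2π)·x))·e^{-x²/8} on (0,∞) has a unique zero at x = 2/√5; moreover h'(x) < 0 for 0 < x < 2/√5 and h'(x) > 0 for x > 2/√5. -/

import Mathlib

open Real MeasureTheory

/-- The standard normal cumulative distribution function. -/
noncomputable def stdNormalCDF (x : ℝ) : ℝ :=
  (Real.sqrt (2 * Real.pi))⁻¹ * ∫ v in Set.Iic x, Real.exp (-v ^ 2 / 2)

/-- The function h from the paper. -/
noncomputable def hFun (x : ℝ) : ℝ :=
  stdNormalCDF (x / 2) + 1 / (3 * Real.sqrt (2 * Real.pi) * x) * Real.exp (-x ^ 2 / 8)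

lemma gauss_integrable : MeasureTheory.Integrable (fun v : ℝ => Real.exp (-v ^ 2 / 2)) := by
  have := integrable_exp_neg_mul_sq (b := (1/2 : ℝ)) (by norm_num)
  convert this using 2 with v
  ring_nf

lemma hasDerivAt_stdNormalCDF (x : ℝ) :
    HasDerivAt stdNormalCDF ((Real.sqrt (2 * Real.pi))⁻¹ * Real.exp (-x ^ 2 / 2)) x := by
  have hint : ∀ y : ℝ, (∫ v in Set.Iic y, Real.exp (-v ^ 2 / 2)) =
      (∫ v in Set.Iic (0:ℝ), Real.exp (-v ^ 2 / 2)) + ∫ v in (0:ℝ)..y, Real.exp (-v ^ 2 / 2) := by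
    intro y
    have := intervalIntegral.integral_Iic_sub_Iic (f := fun v : ℝ => Real.exp (-v ^ 2 / 2))
      (μ := volume) (a := (0:ℝ)) (b := y) gauss_integrable.integrableOn
      gauss_integrable.integrableOn
    linarith [this]
  have hd : HasDerivAt (fun y : ℝ => ∫ v in (0:ℝ)..y, Real.exp (-v ^ 2 / 2))
      (Real.exp (-x ^ 2 / 2)) x := by
    have hcont : Continuous fun v : ℝ => Real.exp (-v ^ 2 / 2) :=
      Real.continuous_exp.comp (((continuous_pow 2).neg).div_const 2)
    exact intervalIntegral.integral_hasDerivAt_right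
      (gauss_integrable.intervalIntegrable)
      hcont.aestronglyMeasurable.stronglyMeasurableAtFilter
      hcont.continuousAt
  have : HasDerivAt (fun y : ℝ => (Real.sqrt (2 * Real.pi))⁻¹ *
      ((∫ v in Set.Iic (0:ℝ), Real.exp (-v ^ 2 / 2)) + ∫ v in (0:ℝ)..y, Real.exp (-v ^ 2 / 2)))
      ((Real.sqrt (2 * Real.pi))⁻¹ * Real.exp (-x ^ 2 / 2)) x := by
    exact ((hd.const_add _).const_mul _)
  refine this.congr_of_eventuallyEq ?_
  filter_upwards with y
  rw [stdNormalCDF, hint y]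

lemma hasDerivAt_hFun {x : ℝ} (hx : 0 < x) :
    HasDerivAt hFun
      ((Real.sqrt (2 * Real.pi))⁻¹ * Real.exp (-x ^ 2 / 8) * (5/12 - 1/(3 * x ^ 2))) x := by
  have hs : (0:ℝ) < Real.sqrt (2 * Real.pi) :=
    Real.sqrt_pos.mpr (by positivity)
  have h1 : HasDerivAt (fun y : ℝ => stdNormalCDF (y / 2))
      ((Real.sqrt (2 * Real.pi))⁻¹ * Real.exp (-x ^ 2 / 8) * (1/2)) x := by
    have h := (hasDerivAt_stdNormalCDF (x / 2)).comp x ((hasDerivAt_id x).div_const 2)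
    have e : ((Real.sqrt (2 * Real.pi))⁻¹ * Real.exp (-(x / 2) ^ 2 / 2)) * (1/2)
        = (Real.sqrt (2 * Real.pi))⁻¹ * Real.exp (-x ^ 2 / 8) * (1/2) := by
      rw [show (-(x / 2) ^ 2 / 2 : ℝ) = -x ^ 2 / 8 by ring]
    rw [e] at h
    exact h
  -- second term
  have h2 : HasDerivAt (fun y : ℝ => 1 / (3 * Real.sqrt (2 * Real.pi) * y) * Real.exp (-y ^ 2 / 8))
      ((Real.sqrt (2 * Real.pi))⁻¹ * Real.exp (-x ^ 2 / 8) * (-(1/(3 * x ^ 2)) - 1/12)) x := by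
    have ha : HasDerivAt (fun y : ℝ => 1 / (3 * Real.sqrt (2 * Real.pi) * y))
        (-(3 * Real.sqrt (2 * Real.pi)) / (3 * Real.sqrt (2 * Real.pi) * x) ^ 2) x := by
      have hb : HasDerivAt (fun y : ℝ => 3 * Real.sqrt (2 * Real.pi) * y)
          (3 * Real.sqrt (2 * Real.pi)) x := by
        simpa using (hasDerivAt_id x).const_mul (3 * Real.sqrt (2 * Real.pi))
      simp only [one_div]; exact hb.inv (by positivity : (0:ℝ) < 3 * Real.sqrt (2 * Real.pi) * x).ne'
    have hc : HasDerivAt (fun y : ℝ => Real.exp (-y ^ 2 / 8))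
        (Real.exp (-x ^ 2 / 8) * (-x / 4)) x := by
      have hp : HasDerivAt (fun y : ℝ => -y ^ 2 / 8) (-x / 4) x := by
        have := ((hasDerivAt_pow 2 x).neg).div_const 8
        refine this.congr_deriv ?_
        ring
      exact (Real.hasDerivAt_exp _).comp x hp
    have := ha.mul hc
    refine this.congr_deriv ?_
    field_simp
    ring
  have := h1.add h2
  refine this.congr_deriv ?_
  ring

lemma deriv_hFun {x : ℝ} (hx : 0 < x) :
    deriv hFun x = (Real.sqrt (2 * Real.pi))⁻¹ * Real.exp (-x ^ 2 / 8) * (5/12 - 1/(3 * x ^ 2)) :=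
  (hasDerivAt_hFun hx).deriv

theorem stmt_8 :
    (∀ x : ℝ, 0 < x → (deriv hFun x = 0 ↔ x = 2 / Real.sqrt 5)) ∧
    (∀ x : ℝ, 0 < x → x < 2 / Real.sqrt 5 → deriv hFun x < 0) ∧
    (∀ x : ℝ, 2 / Real.sqrt 5 < x → 0 < deriv hFun x) := by
  have h5 : (0:ℝ) < Real.sqrt 5 := Real.sqrt_pos.mpr (by norm_num)
  have h5sq : Real.sqrt 5 ^ 2 = 5 := Real.sq_sqrt (by norm_num)
  have hcrit : (0:ℝ) < 2 / Real.sqrt 5 := by positivity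
  have key : ∀ x : ℝ, 0 < x →
      (5/12 - 1/(3 * x ^ 2)) = (5 * x ^ 2 - 4) / (12 * x ^ 2) := by
    intro x hx; field_simp; ring
  have hposfac : ∀ x : ℝ, 0 < x →
      0 < (Real.sqrt (2 * Real.pi))⁻¹ * Real.exp (-x ^ 2 / 8) := by
    intro x hx
    have : (0:ℝ) < Real.sqrt (2 * Real.pi) := Real.sqrt_pos.mpr (by positivity)
    positivity
  have hcritsq : (2 / Real.sqrt 5) ^ 2 = 4 / 5 := by
    rw [div_pow, h5sq]; norm_num
  refine ⟨?_, ?_, ?_⟩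
  · intro x hx
    rw [deriv_hFun hx, key x hx]
    constructor
    · intro h
      have h0 := mul_eq_zero.mp h
      have hf := hposfac x hx
      have hnum : 5 * x ^ 2 - 4 = 0 := by
        rcases h0 with h0 | h0
        · exact absurd h0 hf.ne'
        · have : (0:ℝ) < 12 * x ^ 2 := by positivity
          field_simp at h0
          linarith
      have hfac : (x - 2 / Real.sqrt 5) * (x + 2 / Real.sqrt 5) = 0 := by
        linear_combination (1/5) * hnum - hcritsq
      rcases mul_eq_zero.mp hfac with h' | h'
      · linarith
      · linarith
    · intro h
      subst h
      rw [hcritsq]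
      norm_num
  · intro x hx hlt
    rw [deriv_hFun hx, key x hx]
    have hf := hposfac x hx
    have hxsq : x ^ 2 < 4 / 5 := by
      calc x ^ 2 < (2 / Real.sqrt 5) ^ 2 := by nlinarith
        _ = 4 / 5 := hcritsq
    have hnum : (5 * x ^ 2 - 4) / (12 * x ^ 2) < 0 := by
      apply div_neg_of_neg_of_pos (by linarith) (by positivity)
    exact mul_neg_of_pos_of_neg hf hnum
  · intro x hx
    have hx0 : 0 < x := lt_trans hcrit hx
    rw [deriv_hFun hx0, key x hx0]
    have hf := hposfac x hx0
    have hxsq : 4 / 5 < x ^ 2 := by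
      calc (4:ℝ)/5 = (2 / Real.sqrt 5) ^ 2 := hcritsq.symm
        _ < x ^ 2 := by nlinarith
    have hnum : 0 < (5 * x ^ 2 - 4) / (12 * x ^ 2) := by
      apply div_pos (by linarith) (by positivity)
    exact mul_pos hf hnum
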